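/- Let P be an open subspace of ℝ^{n+1}, let τ : P → ℝ be projection onto the last coordinate. Suppose for each integer i there is a continuous section s_i : [i, i+1] → P of τ over [i, i+1], and for each integer i a continuous path γ_i : [0,1] → P_i (the fiber of τ over i) from s_{i−1}(i) to s_i(i). Then there exists a global continuous section s : ℝ → P of τ. -/

import Mathlib

/-!
The compact set swept out by the fibre path `γ i` and the section `s i` has a uniform vertical
neighbourhood inside the open set `P`. Hence `γ i`, pushed upwards, becomes a section over a short
interval `[i, i + ε]`, and `s i`, compressed onto `[i + ε, i + 1]`, continues it to a section over
`[i, i + 1]` running from `γ i 0 = s (i - 1) i` to `s i (i + 1) = γ (i + 1) 0`. These sections agree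
at the integers, so they glue to a global section.
-/

open Set

theorem locallyFinite_Icc_intCast_add_one : LocallyFinite fun i : ℤ => Icc (i : ℝ) (i + 1) :=
  locallyFinite_Icc_of_tendsto tendsto_intCast_atTop_atTop
    (Filter.tendsto_atBot_add_const_right _ 1 (tendsto_intCast_atBot_iff.2 Filter.tendsto_id))

theorem continuous_glue_Icc_intCast {X : Type*} [TopologicalSpace X] {f : ℤ → ℝ → X}
    (hf : ∀ i : ℤ, ContinuousOn (f i) (Icc (i : ℝ) (i + 1)))
    (hmatch : ∀ i : ℤ, f (i + 1) (i + 1) = f i (i + 1)) : Continuous fun x => f ⌊x⌋ x := by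
  refine locallyFinite_Icc_intCast_add_one.continuous ?_ (fun _ => isClosed_Icc)
    fun i => (hf i).congr fun x hx => ?_
  · exact eq_univ_of_forall fun x =>
      mem_iUnion.2 ⟨⌊x⌋, Int.floor_le x, (Int.lt_floor_add_one x).le⟩
  · rcases hx.2.lt_or_eq with hlt | rfl
    · rw [Int.floor_eq_iff.2 ⟨hx.1, hlt⟩]
    · simpa using hmatch i

section RealArithmetic

variable {a b ε x : ℝ}

theorem sub_div_mem_Icc_zero_one (hε : 0 < ε) (hx : x ∈ Icc a (a + ε)) :
    (x - a) / ε ∈ Icc 0 1 :=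
  ⟨div_nonneg (by linarith [hx.1]) hε.le, (div_le_one hε).2 (by linarith [hx.2])⟩

theorem mul_div_mem_Icc_zero_self (hε : 0 ≤ ε) (hεb : a + ε < b) (hx : x ∈ Icc (a + ε) b) :
    ε * ((b - x) / (b - a - ε)) ∈ Icc 0 ε := by
  have hpos : 0 < b - a - ε := by linarith
  exact ⟨mul_nonneg hε (div_nonneg (by linarith [hx.2]) hpos.le),
    mul_le_of_le_one_right hε ((div_le_one hpos).2 (by linarith [hx.1]))⟩

theorem sub_mul_div_mem_Icc (hε : 0 ≤ ε) (hεb : a + ε < b) (hx : x ∈ Icc (a + ε) b) :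
    x - ε * ((b - x) / (b - a - ε)) ∈ Icc a b := by
  have := mul_div_mem_Icc_zero_self hε hεb hx
  constructor <;> linarith [hx.1, hx.2, this.1, this.2]

end RealArithmetic

section TiltConcat

variable {E : Type*}

-- The second branch runs through `s` along the affine map `[a + ε, b] → [a, b]`, which moves each
-- point down by at most `ε`.
noncomputable def tiltConcat (γ s : ℝ → E × ℝ) (a b ε x : ℝ) : E × ℝ :=
  if x ≤ a + ε then ((γ ((x - a) / ε)).1, x) else ((s (x - ε * ((b - x) / (b - a - ε)))).1, x)

variable {γ s : ℝ → E × ℝ} {a b ε x : ℝ}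

@[simp]
theorem snd_tiltConcat : (tiltConcat γ s a b ε x).2 = x := by
  unfold tiltConcat
  split_ifs <;> rfl

theorem tiltConcat_of_le (hx : x ≤ a + ε) :
    tiltConcat γ s a b ε x = ((γ ((x - a) / ε)).1, x) :=
  if_pos hx

theorem tiltConcat_of_mem_Icc (hγs : γ 1 = s a) (hε : 0 < ε) (hεb : a + ε < b)
    (hx : x ∈ Icc (a + ε) b) :
    tiltConcat γ s a b ε x = ((s (x - ε * ((b - x) / (b - a - ε)))).1, x) := by
  rcases hx.1.eq_or_lt with rfl | hlt
  · rw [tiltConcat_of_le le_rfl, add_sub_cancel_left, div_self hε.ne', hγs,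
      show b - (a + ε) = b - a - ε by ring, div_self (by linarith : (0 : ℝ) < b - a - ε).ne',
      mul_one, add_sub_cancel_right]
  · exact if_neg (not_le.2 hlt)

theorem mapsTo_tiltConcat {P : Set (E × ℝ)} {δ : ℝ}
    (hvert : ∀ p ∈ γ '' Icc 0 1 ∪ s '' Icc a b, ∀ x : ℝ, |x - p.2| < δ → (p.1, x) ∈ P)
    (hs_sec : ∀ x ∈ Icc a b, (s x).2 = x) (hγ_fib : ∀ t ∈ Icc (0 : ℝ) 1, (γ t).2 = a)
    (hγs : γ 1 = s a) (hε : 0 < ε) (hεδ : ε < δ) (hεb : a + ε < b) :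
    MapsTo (tiltConcat γ s a b ε) (Icc a b) P := by
  intro x hx
  by_cases h : x ≤ a + ε
  · have ht := sub_div_mem_Icc_zero_one hε ⟨hx.1, h⟩
    rw [tiltConcat_of_le h]
    refine hvert _ (Or.inl (mem_image_of_mem _ ht)) x ?_
    rw [hγ_fib _ ht, abs_of_nonneg (by linarith [hx.1])]
    linarith
  · have hx' : x ∈ Icc (a + ε) b := ⟨(not_le.1 h).le, hx.2⟩
    have hy := sub_mul_div_mem_Icc hε.le hεb hx'
    have hshift := mul_div_mem_Icc_zero_self hε.le hεb hx'
    rw [tiltConcat_of_mem_Icc hγs hε hεb hx']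
    refine hvert _ (Or.inr (mem_image_of_mem _ hy)) x ?_
    rw [hs_sec _ hy, sub_sub_cancel, abs_of_nonneg hshift.1]
    linarith [hshift.2]

theorem continuousOn_tiltConcat [TopologicalSpace E] (hγ : ContinuousOn γ (Icc 0 1))
    (hs : ContinuousOn s (Icc a b)) (hγs : γ 1 = s a) (hε : 0 < ε) (hεb : a + ε < b) :
    ContinuousOn (tiltConcat γ s a b ε) (Icc a b) := by
  have htilt : ContinuousOn (fun x => ((γ ((x - a) / ε)).1, x)) (Icc a (a + ε)) :=
    ((hγ.comp (by fun_prop) fun _ => sub_div_mem_Icc_zero_one hε).fst).prodMk continuousOn_id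
  have hcomp : ContinuousOn (fun x => ((s (x - ε * ((b - x) / (b - a - ε)))).1, x))
      (Icc (a + ε) b) :=
    ((hs.comp (by fun_prop) fun _ => sub_mul_div_mem_Icc hε.le hεb).fst).prodMk continuousOn_id
  rw [← Icc_union_Icc_eq_Icc (by linarith) hεb.le]
  exact (htilt.congr fun x hx => tiltConcat_of_le hx.2).union_of_isClosed
    (hcomp.congr fun x hx => tiltConcat_of_mem_Icc hγs hε hεb hx) isClosed_Icc isClosed_Icc

variable [PseudoMetricSpace E]

theorem IsCompact.exists_pos_forall_vertical_mem {K P : Set (E × ℝ)} (hK : IsCompact K)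
    (hP : IsOpen P) (hKP : K ⊆ P) :
    ∃ δ > 0, ∀ p ∈ K, ∀ x : ℝ, |x - p.2| < δ → (p.1, x) ∈ P := by
  obtain ⟨δ, hδ, hsub⟩ := hK.exists_thickening_subset_open hP hKP
  refine ⟨δ, hδ, fun p hp x hx => hsub (Metric.mem_thickening_iff.2 ⟨p, hp, ?_⟩)⟩
  simpa [Prod.dist_eq, Real.dist_eq] using hx

theorem exists_sectionOn_Icc_of_fiber_path {P : Set (E × ℝ)} (hP : IsOpen P) (hab : a < b)
    (hs : ContinuousOn s (Icc a b)) (hsP : MapsTo s (Icc a b) P)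
    (hs_sec : ∀ x ∈ Icc a b, (s x).2 = x) (hγ : ContinuousOn γ (Icc 0 1))
    (hγP : MapsTo γ (Icc 0 1) P) (hγ_fib : ∀ t ∈ Icc (0 : ℝ) 1, (γ t).2 = a) (hγs : γ 1 = s a) :
    ∃ σ : ℝ → E × ℝ, ContinuousOn σ (Icc a b) ∧ MapsTo σ (Icc a b) P ∧ (∀ x, (σ x).2 = x) ∧
      σ a = γ 0 ∧ σ b = s b := by
  obtain ⟨δ, hδ, hvert⟩ := ((isCompact_Icc.image_of_continuousOn hγ).union
    (isCompact_Icc.image_of_continuousOn hs)).exists_pos_forall_vertical_mem hP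
    (union_subset hγP.image_subset hsP.image_subset)
  set ε := min (δ / 2) ((b - a) / 2)
  have hε : 0 < ε := lt_min (by linarith) (by linarith)
  have hεδ : ε < δ := (min_le_left _ _).trans_lt (by linarith)
  have hεb : a + ε < b := by linarith [min_le_right (δ / 2) ((b - a) / 2)]
  refine ⟨tiltConcat γ s a b ε, continuousOn_tiltConcat hγ hs hγs hε hεb,
    mapsTo_tiltConcat hvert hs_sec hγ_fib hγs hε hεδ hεb, fun x => snd_tiltConcat, ?_, ?_⟩
  · rw [tiltConcat_of_le (by linarith), sub_self, zero_div]
    exact Prod.ext rfl (hγ_fib 0 ⟨le_rfl, zero_le_one⟩).symm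
  · rw [tiltConcat_of_mem_Icc hγs hε hεb ⟨hεb.le, le_rfl⟩, sub_self, zero_div, mul_zero, sub_zero]
    exact Prod.ext rfl (hs_sec b ⟨hab.le, le_rfl⟩).symm

end TiltConcat

theorem stmt12 (n : ℕ) (P : Set ((Fin n → ℝ) × ℝ)) (hP : IsOpen P)
    (s : ℤ → ℝ → (Fin n → ℝ) × ℝ)
    (hs_cont : ∀ i : ℤ, ContinuousOn (s i) (Set.Icc (i : ℝ) (i + 1)))
    (hs_mem : ∀ i : ℤ, ∀ x ∈ Set.Icc (i : ℝ) (i + 1), s i x ∈ P)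
    (hs_sec : ∀ i : ℤ, ∀ x ∈ Set.Icc (i : ℝ) (i + 1), (s i x).2 = x)
    (γ : ℤ → ℝ → (Fin n → ℝ) × ℝ)
    (hγ_cont : ∀ i : ℤ, ContinuousOn (γ i) (Set.Icc (0 : ℝ) 1))
    (hγ_mem : ∀ i : ℤ, ∀ t ∈ Set.Icc (0 : ℝ) 1, γ i t ∈ P)
    (hγ_fib : ∀ i : ℤ, ∀ t ∈ Set.Icc (0 : ℝ) 1, (γ i t).2 = (i : ℝ))
    (hγ_src : ∀ i : ℤ, γ i 0 = s (i - 1) (i : ℝ))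
    (hγ_tgt : ∀ i : ℤ, γ i 1 = s i (i : ℝ)) :
    ∃ S : ℝ → (Fin n → ℝ) × ℝ,
      Continuous S ∧ (∀ x : ℝ, S x ∈ P) ∧ ∀ x : ℝ, (S x).2 = x := by
  choose σ hσ_cont hσ_mem hσ_sec hσ_start hσ_end using fun i : ℤ =>
    exists_sectionOn_Icc_of_fiber_path hP (lt_add_one (i : ℝ)) (hs_cont i) (hs_mem i) (hs_sec i)
      (hγ_cont i) (hγ_mem i) (hγ_fib i) (hγ_tgt i)
  have hmatch : ∀ i : ℤ, σ (i + 1) (i + 1) = σ i (i + 1) := fun i => by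
    simpa [hσ_end, hγ_src] using hσ_start (i + 1)
  exact ⟨fun x => σ ⌊x⌋ x, continuous_glue_Icc_intCast hσ_cont hmatch,
    fun x => hσ_mem ⌊x⌋ ⟨Int.floor_le x, (Int.lt_floor_add_one x).le⟩, fun x => hσ_sec ⌊x⌋ x⟩
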